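/- Let G be a connected Eulerian digraph (every vertex has equal indegree and outdegree, all positive). Then the number of oriented spanning trees rooted at u is the same for every vertex u of G. -/

import Mathlib

/-! A digraph on a finite vertex type `V` is given by its edge set `E : Finset (V × V)`. -/

variable {V : Type*} [Fintype V] [DecidableEq V]

/-- The outdegree of a vertex `v`: the number of edges with tail `v`. -/
def outdeg (E : Finset (V × V)) (v : V) : ℕ := (E.filter fun e => e.1 = v).card

/-- The indegree of a vertex `v`: the number of edges with head `v`. -/
def indeg (E : Finset (V × V)) (v : V) : ℕ := (E.filter fun e => e.2 = v).card

/-- The edge set of the line digraph: its vertices are the edges of `G`, with an edge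
`e → f` exactly when the head of `e` is the tail of `f`. -/
def lineE (E : Finset (V × V)) : Finset ({e // e ∈ E} × {e // e ∈ E}) :=
  Finset.univ.filter fun p => (p.1 : V × V).2 = (p.2 : V × V).1

/-- Strong connectivity: every vertex can reach every other vertex along directed edges. -/
def StronglyConnected (E : Finset (V × V)) : Prop :=
  ∀ u v : V, Relation.ReflTransGen (fun a b => (a, b) ∈ E) u v

/-- The transition matrix of the simple random walk on the digraph `E`: from `i`, move to
each out-neighbour with probability `1 / d⁺(i)`. -/
noncomputable def transMat (E : Finset (V × V)) : Matrix V V ℝ :=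
  fun i j => if (i, j) ∈ E then (outdeg E i : ℝ)⁻¹ else 0

/-- The Kemeny constant of `P`, defined spectrally as `∑_{λ ≠ 1} 1/(1-λ)`, the sum running
over the roots (with multiplicity) of the characteristic polynomial of `P` over `ℂ`,
with one copy of the eigenvalue `1` removed. -/
noncomputable def kemeny {n : Type*} [Fintype n] [DecidableEq n] (P : Matrix n n ℝ) : ℂ :=
  (((P.map (Complex.ofReal)).charpoly.roots.erase 1).map fun z => (1 - z)⁻¹).sum

/-- `π` is a stationary distribution of `P`: positive, summing to `1`, with `πᵀ P = πᵀ`. -/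
def IsStationaryDist {n : Type*} [Fintype n] (P : Matrix n n ℝ) (π : n → ℝ) : Prop :=
  (∀ i, 0 < π i) ∧ (∑ i, π i = 1) ∧ ∀ j, ∑ i, π i * P i j = π j

/-- `f` is (the parent map of) an oriented spanning tree of `E` rooted at `u`: the root is
a fixed point, every other vertex `v` has its unique out-edge `(v, f v) ∈ E`, and iterating
`f` from any vertex reaches the root. -/
def IsSpanTree (E : Finset (V × V)) (u : V) (f : V → V) : Prop :=
  f u = u ∧ (∀ v, v ≠ u → (v, f v) ∈ E) ∧ ∀ v, ∃ k : ℕ, f^[k] v = u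

/-- The number of oriented spanning trees of `E` rooted at `u`. -/
noncomputable def kappa (E : Finset (V × V)) (u : V) : ℕ :=
  Nat.card {f : V → V // IsSpanTree E u f}

/-- `σ` is (the successor map of) an Eulerian circuit of `E`: a permutation of the edges
such that each edge is followed by an edge starting at its head, acting transitively on
the edges (a single closed walk through all edges). Eulerian circuits, counted up to
cyclic rotation, correspond bijectively to such permutations. -/
def IsEulerSucc (E : Finset (V × V)) (σ : Equiv.Perm {e // e ∈ E}) : Prop :=
  (∀ e : {e // e ∈ E}, (e : V × V).2 = ((σ e : {e // e ∈ E}) : V × V).1) ∧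
    ∀ e f : {e // e ∈ E}, ∃ k : ℕ, (σ ^ k) e = f

/-- The number of Eulerian circuits of `E`. -/
noncomputable def eulerCount (E : Finset (V × V)) : ℕ :=
  Nat.card {σ : Equiv.Perm {e // e ∈ E} // IsEulerSucc E σ}

/-- The `k`-blow-up of `E`: each vertex `i` becomes the class `{i} × Fin k`, with all edges
from the class of `i` to the class of `j` whenever `(i, j)` is an edge. -/
def blowup (E : Finset (V × V)) (k : ℕ) : Finset ((V × Fin k) × (V × Fin k)) :=
  Finset.univ.filter fun p => (p.1.1, p.2.1) ∈ E

/-- The spanning tree enumerator of `E` rooted at `u`, with edge weights induced by vertex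
indeterminates `w` (the edge `(v, z)` has weight `w z`): the sum over all oriented spanning
trees rooted at `u` of the product of the weights of their edges. -/
noncomputable def treeEnum {R : Type*} [CommRing R] (E : Finset (V × V)) (w : V → R)
    (u : V) : R :=
  ∑ᶠ (f : V → V) (_ : IsSpanTree E u f), ∏ v ∈ Finset.univ.erase u, w (f v)
/-! The Laplacian `L = D⁺ - A` of the digraph has zero row sums, and zero column sums because
in- and outdegrees agree. By the maximum principle and strong connectivity, the kernel and the
left kernel of `L` both consist of the constant vectors. As `det L = 0`, the identities
`L * adj L = adj L * L = 0` make every column and every row of `adj L` constant, so all diagonal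
entries of `adj L` coincide.

The directed matrix-tree theorem identifies `adj L w w` with the number of spanning trees rooted
at `w`. Replace row `w` of `L` by `e_w` and write each other row `i` as `∑ (e_i - e_z)` over the
out-neighbours `z` of `i`; multilinearity expands the determinant into one term per parent map
`r`. The term is `1` when `r` is a tree towards `w` (the matrix is unitriangular for the order by
depth) and `0` otherwise (the indicator of the vertices that never reach `w` lies in its
kernel). -/

open Matrix Finset

namespace Matrix

variable {n R : Type*} [Fintype n]

theorem apply_eq_of_mulVec_eq_zero [CommRing R] [LinearOrder R] [IsStrictOrderedRing R]
    {M : Matrix n n R} (hoff : ∀ i j, i ≠ j → M i j ≤ 0) (hrow : ∀ i, ∑ j, M i j = 0)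
    (hconn : ∀ a b, Relation.ReflTransGen (fun i j => M i j ≠ 0) a b) {x : n → R}
    (hx : M *ᵥ x = 0) (a b : n) : x a = x b := by
  obtain ⟨c, -, hmax⟩ := exists_max_image univ x ⟨a, mem_univ a⟩
  have hstep : ∀ i j, M i j ≠ 0 → x i = x c → x j = x c := by
    intro i j hij hi
    have hterm : ∀ k ∈ univ, 0 ≤ M i k * (x k - x i) := fun k _ => by
      rcases eq_or_ne i k with rfl | hik
      · simp
      · exact mul_nonneg_of_nonpos_of_nonpos (hoff i k hik) (by linarith [hmax k (mem_univ k)])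
    have hsum : ∑ k, M i k * (x k - x i) = 0 := by
      simp only [mul_sub, sum_sub_distrib, ← sum_mul, hrow, zero_mul, sub_zero]
      exact congrFun hx i
    have := (sum_eq_zero_iff_of_nonneg hterm).1 hsum j (mem_univ j)
    rw [← hi]
    linarith [(mul_eq_zero.1 this).resolve_left hij]
  have hc : ∀ d, x d = x c := fun d =>
    Relation.ReflTransGen.rec rfl (fun _ hij hi => hstep _ _ hij hi) (hconn c d)
  rw [hc a, hc b]

theorem apply_eq_of_vecMul_eq_zero [CommRing R] [LinearOrder R] [IsStrictOrderedRing R]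
    {M : Matrix n n R} (hoff : ∀ i j, i ≠ j → M i j ≤ 0) (hcol : ∀ j, ∑ i, M i j = 0)
    (hconn : ∀ a b, Relation.ReflTransGen (fun i j => M i j ≠ 0) a b) {x : n → R}
    (hx : x ᵥ* M = 0) (a b : n) : x a = x b :=
  apply_eq_of_mulVec_eq_zero (M := Mᵀ) (fun i j hij => hoff j i hij.symm) hcol
    (fun a b => Relation.reflTransGen_swap.2 (hconn b a)) (by rwa [mulVec_transpose]) a b

theorem adjugate_apply_self_eq [DecidableEq n] [CommRing R] {M : Matrix n n R} (hdet : M.det = 0)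
    (hker : ∀ x, M *ᵥ x = 0 → ∀ a b, x a = x b) (hker' : ∀ x, x ᵥ* M = 0 → ∀ a b, x a = x b)
    (u v : n) : adjugate M u u = adjugate M v v := by
  have hcol : ∀ j, M *ᵥ (fun i => adjugate M i j) = 0 := fun j => by
    ext i
    simpa [mul_adjugate, hdet, mulVec, dotProduct, mul_apply] using
      congrFun (congrFun (mul_adjugate M) i) j
  have hrow : ∀ i, (fun j => adjugate M i j) ᵥ* M = 0 := fun i => by
    ext j
    simpa [adjugate_mul, hdet, vecMul, dotProduct, mul_apply] using
      congrFun (congrFun (adjugate_mul M) i) j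
  calc adjugate M u u = adjugate M v u := hker _ (hcol u) u v
    _ = adjugate M v v := hker' _ (hrow v) u v

end Matrix

namespace Function

theorem find_iterate_apply_lt {α : Type*} [DecidableEq α] {f : α → α} {w : α}
    (h : ∀ v, ∃ k, f^[k] v = w) {i : α} (hi : i ≠ w) : Nat.find (h (f i)) < Nat.find (h i) := by
  have hpos : Nat.find (h i) ≠ 0 := fun h0 => hi (by simpa [h0] using Nat.find_spec (h i))
  have hle : Nat.find (h (f i)) ≤ Nat.find (h i) - 1 := Nat.find_min' _ <| by
    rw [← iterate_succ_apply, Nat.succ_eq_add_one, Nat.sub_add_cancel (by omega)]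
    exact Nat.find_spec (h i)
  omega

theorem forall_iterate_ne_iff {α : Type*} {f : α → α} {w i : α} (hi : i ≠ w) :
    (∀ k, f^[k] i ≠ w) ↔ ∀ k, f^[k] (f i) ≠ w := by
  refine ⟨fun h k => ?_, fun h k => ?_⟩
  · simpa only [iterate_succ_apply] using h (k + 1)
  · cases k with
    | zero => exact hi
    | succ k => simpa only [iterate_succ_apply] using h k

end Function

section Laplacian

variable {R : Type*} (E : Finset (V × V))

theorem outdeg_eq_card (i : V) : outdeg E i = #{j | (i, j) ∈ E} := by
  refine card_nbij' Prod.snd (Prod.mk i) ?_ ?_ ?_ ?_ <;> intro x hx <;> aesop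

theorem indeg_eq_card (j : V) : indeg E j = #{i | (i, j) ∈ E} := by
  refine card_nbij' Prod.fst (Prod.mk · j) ?_ ?_ ?_ ?_ <;> intro x hx <;> aesop

variable (R) in
def laplacian [Ring R] : Matrix V V R :=
  diagonal (fun i => (outdeg E i : R)) - of fun i j => if (i, j) ∈ E then 1 else 0

omit [Fintype V] in
theorem laplacian_apply_of_ne [Ring R] {i j : V} (h : i ≠ j) :
    laplacian R E i j = -if (i, j) ∈ E then 1 else 0 := by
  simp [laplacian, diagonal_apply_ne _ h]

omit [Fintype V] in
theorem laplacian_apply_nonpos_of_ne [Ring R] [PartialOrder R] [IsOrderedRing R] {i j : V}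
    (h : i ≠ j) : laplacian R E i j ≤ 0 := by
  rw [laplacian_apply_of_ne E h, neg_nonpos]
  split_ifs
  exacts [zero_le_one, le_rfl]

theorem sum_laplacian_row [Ring R] (i : V) : ∑ j, laplacian R E i j = 0 := by
  simp [laplacian, diagonal_apply, sum_sub_distrib, outdeg_eq_card]

theorem sum_laplacian_col [Ring R] (hdeg : ∀ v, outdeg E v = indeg E v) (j : V) :
    ∑ i, laplacian R E i j = 0 := by
  simp [laplacian, diagonal_apply, sum_sub_distrib, hdeg, indeg_eq_card]

theorem det_laplacian [CommRing R] [Nonempty V] : (laplacian R E).det = 0 :=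
  det_eq_zero_of_mulVec_eq_zero_of_mem_nonZeroDivisors (v := 1) (i := Classical.arbitrary V)
    (by ext i; simp [mulVec, dotProduct, sum_laplacian_row]) (by simp)

omit [Fintype V] in
theorem reflTransGen_laplacian_ne_zero [Ring R] [Nontrivial R] (hconn : StronglyConnected E)
    (a b : V) : Relation.ReflTransGen (fun i j => laplacian R E i j ≠ 0) a b := by
  refine Relation.ReflTransGen.lift' id (fun i j hij => ?_) _ _ (hconn a b)
  rcases eq_or_ne i j with rfl | hne
  · rfl
  · exact .single (by simp [laplacian_apply_of_ne E hne, hij])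

end Laplacian

section MatrixTree

variable {R : Type*} [CommRing R]

variable (R) in
def parentRow (w i z : V) : V → R :=
  if i = w then Pi.single w 1 else Pi.single i 1 - Pi.single z 1

variable (R) in
def parentMatrix (w : V) (r : V → V) : Matrix V V R :=
  of fun i => parentRow R w i (r i)

omit [Fintype V] in
theorem parentMatrix_apply_of_ne_parent {w : V} {r : V → V} {i j : V} (h : i = w ∨ j ≠ r i) :
    parentMatrix R w r i j = if i = j then 1 else 0 := by
  by_cases hi : i = w
  · subst hi
    simp [parentMatrix, parentRow, Pi.single_apply, eq_comm]
  · rw [parentMatrix, of_apply, parentRow, if_neg hi, Pi.sub_apply, Pi.single_apply,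
      Pi.single_apply, if_neg (h.resolve_left hi), sub_zero]
    simp only [eq_comm]

theorem parentMatrix_mulVec (w : V) (r : V → V) (y : V → R) (i : V) :
    (parentMatrix R w r *ᵥ y) i = if i = w then y w else y i - y (r i) := by
  change parentRow R w i (r i) ⬝ᵥ y = _
  unfold parentRow
  split_ifs <;> simp [sub_dotProduct, single_dotProduct]

theorem det_parentMatrix_eq_zero {w : V} {r : V → V} {v : V} (hv : ∀ k, r^[k] v ≠ w) :
    (parentMatrix R w r).det = 0 := by
  classical
  let y : V → R := fun x => if ∀ k, r^[k] x ≠ w then 1 else 0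
  have hy : parentMatrix R w r *ᵥ y = 0 := by
    ext i
    rw [parentMatrix_mulVec]
    by_cases hi : i = w
    · have : ¬∀ k, r^[k] w ≠ w := fun h => h 0 rfl
      simp [y, hi, this]
    · simp [y, hi, Function.forall_iterate_ne_iff hi]
  exact det_eq_zero_of_mulVec_eq_zero_of_mem_nonZeroDivisors hy (i := v) (by simp [y, hv])

theorem det_parentMatrix_eq_one {w : V} {r : V → V} (hr : ∀ v, ∃ k, r^[k] v = w) :
    (parentMatrix R w r).det = 1 := by
  let depth : V → ℕ := fun v => Nat.find (hr v)
  have hne_parent : ∀ {i j}, depth i ≤ depth j → i = w ∨ j ≠ r i := by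
    intro i j hij
    by_contra! h
    have := Function.find_iterate_apply_lt hr h.1
    simp only [depth, h.2] at hij
    omega
  have htri : (parentMatrix R w r).BlockTriangular (OrderDual.toDual ∘ depth) := by
    intro i j hij
    rw [parentMatrix_apply_of_ne_parent (hne_parent (le_of_lt hij)), if_neg]
    rintro rfl
    exact lt_irrefl _ hij
  rw [htri.det]
  refine prod_eq_one fun a _ => ?_
  have : (parentMatrix R w r).toSquareBlock (OrderDual.toDual ∘ depth) a = 1 := by
    ext ⟨i, hi⟩ ⟨j, hj⟩
    rw [toSquareBlock_def, of_apply, parentMatrix_apply_of_ne_parent, one_apply]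
    · simp
    · exact hne_parent (hi.trans hj.symm).ge
  rw [this, det_one]

variable (E : Finset (V × V))

def parentChoices (w i : V) : Finset V :=
  if i = w then {w} else ({j | (i, j) ∈ E} : Finset V)

theorem mem_piFinset_parentChoices {w : V} {r : V → V} :
    r ∈ Fintype.piFinset (parentChoices E w) ↔ r w = w ∧ ∀ i, i ≠ w → (i, r i) ∈ E := by
  simp only [Fintype.mem_piFinset, parentChoices]
  refine ⟨fun h => ⟨by simpa using h w, fun i hi => by simpa [hi] using h i⟩, fun h i => ?_⟩
  by_cases hi : i = w
  · subst hi; simp [h.1]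
  · simp [hi, h.2 i hi]

theorem det_updateRow_laplacian (w : V) :
    ((laplacian R E).updateRow w (Pi.single w 1)).det =
      ∑ r ∈ Fintype.piFinset (parentChoices E w), (parentMatrix R w r).det := by
  have hrows : (laplacian R E).updateRow w (Pi.single w 1) =
      of fun i => ∑ z ∈ parentChoices E w i, parentRow R w i z := by
    ext i j
    by_cases hi : i = w
    · subst hi; simp [parentChoices, parentRow]
    · simp [parentChoices, parentRow, hi, laplacian, diagonal_apply,
        outdeg_eq_card, Pi.single_apply, sum_sub_distrib]
      exact if_congr eq_comm rfl rfl
  rw [hrows]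
  exact MultilinearMap.map_sum_finset (detRowAlternating : (V → R) [⋀^V]→ₗ[R] R).toMultilinearMap
    _ _

theorem sum_det_parentMatrix (w : V) :
    ∑ r ∈ Fintype.piFinset (parentChoices E w), (parentMatrix R w r).det = kappa E w := by
  classical
  have hdet : ∀ r ∈ Fintype.piFinset (parentChoices E w),
      (parentMatrix R w r).det = if IsSpanTree E w r then 1 else 0 := by
    intro r hr
    obtain ⟨hroot, hedge⟩ := (mem_piFinset_parentChoices E).1 hr
    split_ifs with htree
    · exact det_parentMatrix_eq_one htree.2.2
    · obtain ⟨v, hv⟩ : ∃ v, ∀ k, r^[k] v ≠ w := by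
        by_contra! h
        exact htree ⟨hroot, hedge, h⟩
      exact det_parentMatrix_eq_zero hv
  rw [sum_congr rfl hdet, sum_boole, kappa, Nat.card_eq_fintype_card, Fintype.card_subtype]
  congr 2
  ext r
  simp only [mem_filter, mem_univ, true_and, and_iff_right_iff_imp]
  exact fun h => (mem_piFinset_parentChoices E).2 ⟨h.1, h.2.1⟩

theorem kappa_eq_adjugate_laplacian (w : V) : (kappa E w : R) = adjugate (laplacian R E) w w := by
  rw [adjugate_apply, det_updateRow_laplacian, sum_det_parentMatrix]

end MatrixTree

/-- For a connected Eulerian digraph (every vertex has equal, positive in- and outdegree),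
the number of oriented spanning trees rooted at `u` is the same for every vertex `u`. -/
theorem stmt12 (E : Finset (V × V)) (hconn : StronglyConnected E)
    (hdeg : ∀ v, outdeg E v = indeg E v ∧ 0 < outdeg E v) (u v : V) :
    kappa E u = kappa E v := by
  have : Nonempty V := ⟨u⟩
  have hoff : ∀ i j, i ≠ j → laplacian ℚ E i j ≤ 0 := fun _ _ => laplacian_apply_nonpos_of_ne E
  have hadj : adjugate (laplacian ℚ E) u u = adjugate (laplacian ℚ E) v v :=
    adjugate_apply_self_eq (det_laplacian E)
      (fun _ hx => apply_eq_of_mulVec_eq_zero hoff (sum_laplacian_row E)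
        (reflTransGen_laplacian_ne_zero E hconn) hx)
      (fun _ hx => apply_eq_of_vecMul_eq_zero hoff (sum_laplacian_col E fun v => (hdeg v).1)
        (reflTransGen_laplacian_ne_zero E hconn) hx) u v
  exact_mod_cast (kappa_eq_adjugate_laplacian E u).trans
    (hadj.trans (kappa_eq_adjugate_laplacian E v).symm)
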